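/- For every 0 ≤ ε ≤ 1/3, the two-qubit Werner state χ = ε |Ψ⁻⟩⟨Ψ⁻| + (1−ε) I/4 is separable, where I is the 4 × 4 identity matrix. -/

import Mathlib

/-!
For each Pauli matrix `σ`, the product states `P₊ ⊗ P₋` and `P₋ ⊗ P₊` built from the
eigenprojections `P± = (1 ± σ)/2` average to `(1 ⊗ 1 - σ ⊗ σ)/4`. Since
`X ⊗ X + Y ⊗ Y + Z ⊗ Z = 1 - 4 |Ψ⁻⟩⟨Ψ⁻|`, averaging further over the three Pauli matrices gives
the Werner state with `ε = 1/3`, which is therefore separable. The Werner state with `ε = 0` is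
the product `(I/2) ⊗ (I/2)`, and every Werner state with `0 ≤ ε ≤ 1/3` is a convex combination of
these two.
-/

open Matrix Kronecker
open scoped ComplexOrder

/-- A density matrix: positive semidefinite with trace 1. -/
def IsDensityMatrix {m : Type} [Fintype m] [DecidableEq m] (ρ : Matrix m m ℂ) : Prop :=
  ρ.PosSemidef ∧ ρ.trace = 1

/-- The Bell state `|Ψ⁻⟩ = (|01⟩ - |10⟩)/√2` on two qubits,
with `ℂ⁴` realised as functions on `Fin 2 × Fin 2`. -/
noncomputable def psiMinus : Fin 2 × Fin 2 → ℂ := fun p =>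
  if p = (0, 1) then (Real.sqrt 2 : ℂ)⁻¹
  else if p = (1, 0) then -(Real.sqrt 2 : ℂ)⁻¹ else 0

section Separability

variable {m n : Type} [Fintype m] [DecidableEq m] [Fintype n] [DecidableEq n]

variable (m n) in
def productStates : Set (Matrix (m × n) (m × n) ℂ) :=
  {ρ | ∃ A B, IsDensityMatrix A ∧ IsDensityMatrix B ∧ A ⊗ₖ B = ρ}

theorem kronecker_mem_convexHull_productStates {A : Matrix m m ℂ} {B : Matrix n n ℂ}
    (hA : IsDensityMatrix A) (hB : IsDensityMatrix B) :
    A ⊗ₖ B ∈ convexHull ℝ (productStates m n) :=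
  subset_convexHull ℝ _ ⟨A, B, hA, hB, rfl⟩

theorem exists_fin_sum_of_mem_convexHull_productStates {ρ : Matrix (m × n) (m × n) ℂ}
    (hρ : ρ ∈ convexHull ℝ (productStates m n)) :
    ∃ (k : ℕ) (p : Fin k → ℝ) (A : Fin k → Matrix m m ℂ) (B : Fin k → Matrix n n ℂ),
      (∀ j, 0 ≤ p j) ∧ (∑ j, p j = 1) ∧
      (∀ j, IsDensityMatrix (A j) ∧ IsDensityMatrix (B j)) ∧
      ρ = ∑ j, (p j : ℂ) • (A j ⊗ₖ B j) := by
  obtain ⟨ι, _, w, z, hw₀, hw₁, hz, rfl⟩ := mem_convexHull_iff_exists_fintype.mp hρ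
  choose A B hA hB hAB using hz
  let e := (Fintype.equivFin ι).symm
  refine ⟨Fintype.card ι, w ∘ e, A ∘ e, B ∘ e, fun j => hw₀ _, ?_, fun j => ⟨hA _, hB _⟩, ?_⟩
  · simpa only [Function.comp_apply, e.sum_comp] using hw₁
  · rw [← e.sum_comp fun i => w i • z i]
    simp only [Function.comp_apply, hAB, Complex.coe_smul]

end Separability

section Involution

variable {m : Type} [DecidableEq m]

noncomputable def projOfInvolution (σ : Matrix m m ℂ) : Matrix m m ℂ := (2⁻¹ : ℂ) • (1 + σ)

theorem projOfInvolution_mul_self [Fintype m] {σ : Matrix m m ℂ} (hσ : σ * σ = 1) :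
    projOfInvolution σ * projOfInvolution σ = projOfInvolution σ := by
  simp only [projOfInvolution, smul_mul_smul_comm, mul_add, add_mul, one_mul, mul_one, hσ]
  module

theorem posSemidef_projOfInvolution [Fintype m] {σ : Matrix m m ℂ} (hσ : σ.IsHermitian)
    (hσσ : σ * σ = 1) : (projOfInvolution σ).PosSemidef := by
  have hP : (projOfInvolution σ).IsHermitian := by
    simp [projOfInvolution, IsHermitian, conjTranspose_smul, conjTranspose_add, hσ.eq]
  rw [← projOfInvolution_mul_self hσσ]
  nth_rw 1 [← hP.eq]
  exact posSemidef_conjTranspose_mul_self _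

theorem isDensityMatrix_projOfInvolution {σ : Matrix (Fin 2) (Fin 2) ℂ} (hσ : σ.IsHermitian)
    (hσσ : σ * σ = 1) (htr : σ.trace = 0) : IsDensityMatrix (projOfInvolution σ) :=
  ⟨posSemidef_projOfInvolution hσ hσσ, by simp [projOfInvolution, trace_add, htr]⟩

theorem projOfInvolution_kronecker_add_kronecker (σ : Matrix m m ℂ) :
    projOfInvolution σ ⊗ₖ projOfInvolution (-σ) + projOfInvolution (-σ) ⊗ₖ projOfInvolution σ
      = (2⁻¹ : ℂ) • (1 ⊗ₖ 1 - σ ⊗ₖ σ) := by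
  ext ⟨a, b⟩ ⟨c, d⟩
  simp only [projOfInvolution, kroneckerMap_apply, Matrix.add_apply, Matrix.sub_apply,
    Matrix.smul_apply, Matrix.neg_apply, smul_eq_mul]
  ring

end Involution

def pauli : Fin 3 → Matrix (Fin 2) (Fin 2) ℂ :=
  ![!![0, 1; 1, 0], !![0, -Complex.I; Complex.I, 0], !![1, 0; 0, -1]]

theorem pauli_isHermitian (i : Fin 3) : (pauli i).IsHermitian := by
  fin_cases i <;> ext a b <;> fin_cases a <;> fin_cases b <;> simp [pauli]

theorem pauli_mul_self (i : Fin 3) : pauli i * pauli i = 1 := by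
  fin_cases i <;> ext a b <;> fin_cases a <;> fin_cases b <;> simp [pauli]

theorem trace_pauli (i : Fin 3) : (pauli i).trace = 0 := by
  fin_cases i <;> simp [pauli, trace_fin_two]

theorem isDensityMatrix_projOfInvolution_pauli (i : Fin 3) :
    IsDensityMatrix (projOfInvolution (pauli i)) :=
  isDensityMatrix_projOfInvolution (pauli_isHermitian i) (pauli_mul_self i) (trace_pauli i)

theorem isDensityMatrix_projOfInvolution_neg_pauli (i : Fin 3) :
    IsDensityMatrix (projOfInvolution (-pauli i)) :=
  isDensityMatrix_projOfInvolution (pauli_isHermitian i).neg (by simp [pauli_mul_self])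
    (by simp [trace_pauli])

theorem sum_pauli_kronecker_pauli :
    ∑ i, pauli i ⊗ₖ pauli i = 1 - (4 : ℂ) • vecMulVec psiMinus (star psiMinus) := by
  have hsqrt : ((Real.sqrt 2 : ℂ))⁻¹ * ((Real.sqrt 2 : ℂ))⁻¹ = 1 / 2 := by
    rw [← mul_inv, ← Complex.ofReal_mul, Real.mul_self_sqrt zero_le_two]; norm_num
  ext ⟨a, b⟩ ⟨c, d⟩
  fin_cases a <;> fin_cases b <;> fin_cases c <;> fin_cases d <;>
    simp [Fin.sum_univ_three, pauli, psiMinus, vecMulVec_apply, hsqrt] <;> norm_num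

noncomputable def wernerState (ε : ℝ) : Matrix (Fin 2 × Fin 2) (Fin 2 × Fin 2) ℂ :=
  (ε : ℂ) • vecMulVec psiMinus (star psiMinus) + (((1 - ε) / 4 : ℝ) : ℂ) • 1

theorem wernerState_eq_smul_add_smul (ε : ℝ) :
    wernerState ε = (3 * ε) • wernerState 3⁻¹ + (1 - 3 * ε) • wernerState 0 := by
  simp only [wernerState, ← Complex.coe_smul]
  push_cast
  module

theorem wernerState_zero : wernerState 0 = ((2⁻¹ : ℂ) • 1) ⊗ₖ ((2⁻¹ : ℂ) • 1) := by
  rw [smul_kronecker, kronecker_smul, one_kronecker_one, smul_smul, wernerState]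
  norm_num

theorem wernerState_inv_three : wernerState 3⁻¹ =
    ∑ i, (3⁻¹ : ℝ) • ((2⁻¹ : ℝ) • (projOfInvolution (pauli i) ⊗ₖ projOfInvolution (-pauli i)) +
      (2⁻¹ : ℝ) • (projOfInvolution (-pauli i) ⊗ₖ projOfInvolution (pauli i))) := by
  simp only [← smul_add, projOfInvolution_kronecker_add_kronecker, ← Finset.smul_sum,
    Finset.sum_sub_distrib, sum_pauli_kronecker_pauli]
  simp only [wernerState, ← Complex.coe_smul, one_kronecker_one,
    Finset.sum_const, Finset.card_univ, Fintype.card_fin]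
  push_cast
  module

theorem isDensityMatrix_half_one : IsDensityMatrix ((2⁻¹ : ℂ) • (1 : Matrix (Fin 2) (Fin 2) ℂ)) :=
  ⟨PosSemidef.one.smul (by positivity), by simp⟩

theorem wernerState_zero_mem_convexHull :
    wernerState 0 ∈ convexHull ℝ (productStates (Fin 2) (Fin 2)) :=
  wernerState_zero ▸
    kronecker_mem_convexHull_productStates isDensityMatrix_half_one isDensityMatrix_half_one

theorem wernerState_inv_three_mem_convexHull :
    wernerState 3⁻¹ ∈ convexHull ℝ (productStates (Fin 2) (Fin 2)) := by
  have hconv := convex_convexHull ℝ (productStates (Fin 2) (Fin 2))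
  rw [wernerState_inv_three]
  refine hconv.sum_mem (fun _ _ => by norm_num) (by simp) fun i _ => hconv ?_ ?_
    (by norm_num) (by norm_num) (by norm_num)
  · exact kronecker_mem_convexHull_productStates (isDensityMatrix_projOfInvolution_pauli i)
      (isDensityMatrix_projOfInvolution_neg_pauli i)
  · exact kronecker_mem_convexHull_productStates (isDensityMatrix_projOfInvolution_neg_pauli i)
      (isDensityMatrix_projOfInvolution_pauli i)

theorem wernerState_mem_convexHull {ε : ℝ} (hε0 : 0 ≤ ε) (hε : ε ≤ 1 / 3) :
    wernerState ε ∈ convexHull ℝ (productStates (Fin 2) (Fin 2)) := by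
  rw [wernerState_eq_smul_add_smul]
  exact convex_convexHull ℝ _ wernerState_inv_three_mem_convexHull
    wernerState_zero_mem_convexHull (by linarith) (by linarith) (by ring)

theorem werner_state_separable (ε : ℝ) (hε0 : 0 ≤ ε) (hε : ε ≤ 1 / 3) :
    ∃ (k : ℕ) (p : Fin k → ℝ) (A B : Fin k → Matrix (Fin 2) (Fin 2) ℂ),
      (∀ j, 0 ≤ p j) ∧ (∑ j, p j = 1) ∧
      (∀ j, IsDensityMatrix (A j) ∧ IsDensityMatrix (B j)) ∧
      (ε : ℂ) • vecMulVec psiMinus (star psiMinus) + (((1 - ε) / 4 : ℝ) : ℂ) • 1 =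
        ∑ j, (p j : ℂ) • (A j ⊗ₖ B j) :=
  exists_fin_sum_of_mem_convexHull_productStates (wernerState_mem_convexHull hε0 hε)
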